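/- arXiv:1403.7799 — 4 statements merged into one kernel-verified Lean document; each statement's English description precedes it below -/
import Mathlib

section
/- Let σ > 0, k ≥ 0, 0 < β < 1, δ_π ≥ 0, δ_x ≥ 0, set D := σ + δ_x + k·δ_π, and let A be the real 2×2 matrix A = (1/D)·[[σ, 1 − β·δ_π], [k·σ, k + β·(σ + δ_x)]]. Then every (complex) eigenvalue of A has modulus strictly less than 1 if and only if k·(δ_π − 1) + (1 − β)·δ_x > 0. -/
/-!
The eigenvalues of the real 2×2 matrix `A` are the roots of `μ² - (tr A) μ + det A`. For a real
monic quadratic `μ² - t μ + d` both roots lie in the open unit disc iff `|d| < 1` and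
`|t| < 1 + d` (Schur–Cohn): a non-real root has `‖μ‖² = d`, while two real roots `r, s` in
`(-1, 1)` give `(1 - r)(1 - s) > 0` and `(1 + r)(1 + s) > 0`. Here `0 < det A < 1` and
`tr A > 0`, so the criterion reduces to `tr A < 1 + det A`, and
`1 + det A - tr A = (k (δπ - 1) + (1 - β) δx) / (σ + δx + k δπ)`.
-/

open Matrix

theorem Matrix.mem_spectrum_iff_fin_two {K : Type*} [Field K] (M : Matrix (Fin 2) (Fin 2) K)
    (μ : K) : μ ∈ spectrum K M ↔ μ ^ 2 - M.trace * μ + M.det = 0 := by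
  rw [mem_spectrum_iff_isRoot_charpoly, charpoly_fin_two]
  simp

theorem Matrix.mem_spectrum_map_ofReal_iff_fin_two (M : Matrix (Fin 2) (Fin 2) ℝ) (μ : ℂ) :
    μ ∈ spectrum ℂ (M.map (algebraMap ℝ ℂ)) ↔ μ ^ 2 - M.trace * μ + M.det = 0 := by
  rw [mem_spectrum_iff_fin_two, ← AddMonoidHom.map_trace,
    show (M.map (algebraMap ℝ ℂ)).det = M.det from ((algebraMap ℝ ℂ).map_det M).symm]
  rfl

theorem Complex.sq_norm_eq_of_quadratic_eq_zero {t d : ℝ} {μ : ℂ}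
    (hμ : μ ^ 2 - t * μ + d = 0) (him : μ.im ≠ 0) : ‖μ‖ ^ 2 = d := by
  have hre := congrArg re hμ
  have him' := congrArg im hμ
  simp only [pow_two, sub_re, add_re, mul_re, zero_re, zero_im, ofReal_re, ofReal_im, sub_im,
    add_im, mul_im] at hre him'
  have ht : t = 2 * μ.re := by
    apply mul_left_cancel₀ him; linear_combination -him'
  rw [Complex.sq_norm, normSq_apply]
  linear_combination -hre - μ.re * ht

theorem abs_lt_one_of_quadratic_eq_zero {t d r : ℝ} (hd : d < 1) (ht : |t| < 1 + d)
    (hr : r ^ 2 - t * r + d = 0) : |r| < 1 := by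
  obtain ⟨ht₁, ht₂⟩ := abs_lt.mp ht
  rw [abs_lt]
  constructor <;> by_contra! h <;> nlinarith

theorem abs_mul_lt_one_and_abs_add_lt_one_add_mul {r s : ℝ} (hr : |r| < 1) (hs : |s| < 1) :
    |r * s| < 1 ∧ |r + s| < 1 + r * s := by
  obtain ⟨hr₁, hr₂⟩ := abs_lt.mp hr
  obtain ⟨hs₁, hs₂⟩ := abs_lt.mp hs
  refine ⟨?_, abs_lt.mpr ⟨by nlinarith, by nlinarith⟩⟩
  rw [abs_mul]
  exact mul_lt_one_of_nonneg_of_lt_one_left (abs_nonneg r) hr hs.le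

theorem forall_quadratic_eq_zero_norm_lt_one_iff (t d : ℝ) :
    (∀ μ : ℂ, μ ^ 2 - t * μ + d = 0 → ‖μ‖ < 1) ↔ |d| < 1 ∧ |t| < 1 + d := by
  constructor
  · intro h
    rcases lt_or_ge (t ^ 2 - 4 * d) 0 with hΔ | hΔ
    · set q := √(4 * d - t ^ 2)
      have hq : q ^ 2 = 4 * d - t ^ 2 := Real.sq_sqrt (by linarith)
      have hq_pos : 0 < q := Real.sqrt_pos.mpr (by linarith)
      set μ : ℂ := t / 2 + q / 2 * Complex.I
      have hμ : μ ^ 2 - t * μ + d = 0 := by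
        have hq' : (q : ℂ) ^ 2 = 4 * d - t ^ 2 := by exact_mod_cast hq
        linear_combination (-1/4) * hq' + (q ^ 2 / 4 : ℂ) * Complex.I_sq
      have him : μ.im ≠ 0 := by
        simpa [μ] using hq_pos.ne'
      have hd : d < 1 := by
        rw [← Complex.sq_norm_eq_of_quadratic_eq_zero hμ him]
        exact (sq_lt_one_iff₀ (norm_nonneg μ)).mpr (h μ hμ)
      refine ⟨abs_lt.mpr ⟨by nlinarith, hd⟩, abs_lt_of_sq_lt_sq ?_ (by nlinarith)⟩
      nlinarith
    · set s := √(t ^ 2 - 4 * d)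
      have hs : s ^ 2 = t ^ 2 - 4 * d := Real.sq_sqrt hΔ
      have hroot : ∀ r : ℝ, r ^ 2 - t * r + d = 0 → |r| < 1 := fun r hr => by
        simpa using h r (by exact_mod_cast hr)
      have h₁ := hroot ((t + s) / 2) (by linear_combination (1/4) * hs)
      have h₂ := hroot ((t - s) / 2) (by linear_combination (1/4) * hs)
      have hprod : (t + s) / 2 * ((t - s) / 2) = d := by linear_combination (-1/4) * hs
      have hsum : (t + s) / 2 + (t - s) / 2 = t := by ring
      simpa only [hprod, hsum] using abs_mul_lt_one_and_abs_add_lt_one_add_mul h₁ h₂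
  · rintro ⟨hd, ht⟩ μ hμ
    by_cases him : μ.im = 0
    · rw [← Complex.re_add_im μ, him, Complex.ofReal_zero, zero_mul, add_zero] at hμ ⊢
      rw [Complex.norm_real, Real.norm_eq_abs]
      exact abs_lt_one_of_quadratic_eq_zero (abs_lt.mp hd).2 ht (by exact_mod_cast hμ)
    · exact (sq_lt_one_iff₀ (norm_nonneg μ)).mp
        (Complex.sq_norm_eq_of_quadratic_eq_zero hμ him ▸ (abs_lt.mp hd).2)

/-- Bullard–Mitra stability condition: both eigenvalues of the DSGE
transition matrix `A` lie strictly inside the unit circle iff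
`k·(δπ − 1) + (1 − β)·δx > 0`. -/
theorem dsge_stability_condition
    (σ k β δπ δx : ℝ)
    (hσ : 0 < σ) (hk : 0 ≤ k) (hβ0 : 0 < β) (hβ1 : β < 1)
    (hδπ : 0 ≤ δπ) (hδx : 0 ≤ δx) :
    (∀ μ ∈ spectrum ℂ
        ((((1 / (σ + δx + k * δπ)) •
            !![σ, 1 - β * δπ; k * σ, k + β * (σ + δx)]).map (algebraMap ℝ ℂ))),
      ‖μ‖ < 1) ↔
    k * (δπ - 1) + (1 - β) * δx > 0 := by
  set D := σ + δx + k * δπ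
  have hD : 0 < D := by positivity
  set A : Matrix (Fin 2) (Fin 2) ℝ := (1 / D) • !![σ, 1 - β * δπ; k * σ, k + β * (σ + δx)]
  have htrace : A.trace = (σ + k + β * (σ + δx)) / D := by
    simp only [A, smul_of, smul_cons, smul_eq_mul, smul_empty, trace_fin_two, of_apply, cons_val',
      cons_val_zero, cons_val_fin_one, cons_val_one]
    ring
  have hdet : A.det = σ * β / D := by
    simp only [A, smul_of, smul_cons, smul_eq_mul, smul_empty, det_fin_two, of_apply, cons_val',
      cons_val_zero, cons_val_fin_one, cons_val_one]
    field_simp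
    ring
  have htrace_pos : 0 < A.trace := by rw [htrace]; positivity
  have hdet_pos : 0 < A.det := by rw [hdet]; positivity
  have hdet_lt_one : A.det < 1 := by rw [hdet, div_lt_one hD]; nlinarith
  have hgap : 1 + A.det - A.trace = (k * (δπ - 1) + (1 - β) * δx) / D := by
    rw [htrace, hdet]; field_simp; ring
  simp_rw [mem_spectrum_map_ofReal_iff_fin_two, forall_quadratic_eq_zero_norm_lt_one_iff,
    abs_of_pos hdet_pos, abs_of_pos htrace_pos]
  rw [and_iff_right hdet_lt_one, ← sub_pos, hgap, div_pos_iff_of_pos_right hD, gt_iff_lt]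
end

section
/- Let X be a positive random variable such that log X has a Gaussian distribution with mean M and variance V² with V > 0, let K > 0, and let ω ∈ {−1, 1}. Then E[max(ω·(X − K), 0)] = ω·exp(M + V²/2)·N(ω·(M − log K + V²)/V) − ω·K·N(ω·(M − log K)/V), where N denotes the standard normal cumulative distribution function N(x) = ∫_{−∞}^x (2π)^{−1/2} e^{−t²/2} dt. -/
/-!
Write `X = exp Y` with `Y ~ N(M, V²)`. The payoff is `w * exp Y - w * K` on the event
`{w * log K ≤ w * Y}` and zero off it. The `K`-term is `K` times the Gaussian probability of this
event. Multiplying the Gaussian density by `exp y` shifts its mean by `V²` and scales it by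
`exp (M + V² / 2)` (completing the square), so the `exp Y`-term is that factor times the probability
of the same event under `N(M + V², V²)`. Both probabilities are values of the standard normal CDF,
because for `w = ±1` the map `y ↦ w * (M - y) / V` sends `N(M, V²)` to `N(0, 1)`.
-/

open MeasureTheory ProbabilityTheory
open scoped NNReal

/-- The standard normal cumulative distribution function. -/
noncomputable def stdNormalCDF (x : ℝ) : ℝ :=
  ∫ t in Set.Iic x, (Real.sqrt (2 * Real.pi))⁻¹ * Real.exp (-t ^ 2 / 2)

open Real Set

lemma stdNormalCDF_eq_gaussianReal (x : ℝ) : stdNormalCDF x = (gaussianReal 0 1).real (Iic x) := by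
  rw [measureReal_def, gaussianReal_apply_eq_integral _ one_ne_zero,
    ENNReal.toReal_ofReal
      (setIntegral_nonneg measurableSet_Iic fun _ _ ↦ gaussianPDFReal_nonneg _ _ _)]
  simp [stdNormalCDF, gaussianPDFReal]

lemma gaussianReal_map_standardize {μ V w : ℝ} {v : ℝ≥0} (hv : (v : ℝ) = V ^ 2) (hV : V ≠ 0)
    (hw : w ^ 2 = 1) : (gaussianReal μ v).map (fun y ↦ w * (μ - y) / V) = gaussianReal 0 1 := by
  have hcomp : (fun y ↦ w * (μ - y) / V) = (fun t ↦ w / V * t) ∘ (fun y ↦ μ - y) := by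
    ext y; simp only [Function.comp_apply]; ring
  rw [hcomp, ← Measure.map_map (by fun_prop) (by fun_prop), gaussianReal_map_const_sub,
    gaussianReal_map_const_mul, sub_self, mul_zero]
  congr 1
  ext
  simp only [NNReal.coe_mul, NNReal.coe_mk, NNReal.coe_one, hv]
  field_simp
  rw [hw]

lemma gaussianReal_real_setOf_mul_le_mul {μ V w : ℝ} {v : ℝ≥0} (hv : (v : ℝ) = V ^ 2)
    (hV : 0 < V) (hw : w ^ 2 = 1) (a : ℝ) :
    (gaussianReal μ v).real {y | w * a ≤ w * y} = stdNormalCDF (w * (μ - a) / V) := by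
  have hset : {y | w * a ≤ w * y} = (fun y ↦ w * (μ - y) / V) ⁻¹' Iic (w * (μ - a) / V) := by
    ext y
    simp only [mem_ofPred_eq, mem_preimage, mem_Iic, div_le_div_iff_of_pos_right hV]
    constructor <;> intro h <;> linarith
  rw [stdNormalCDF_eq_gaussianReal, ← gaussianReal_map_standardize hv hV.ne' hw,
    map_measureReal_apply (by fun_prop : Measurable fun y ↦ w * (μ - y) / V) measurableSet_Iic,
    hset]

lemma exp_mul_gaussianPDFReal {μ : ℝ} {v : ℝ≥0} (hv : v ≠ 0) (x : ℝ) :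
    exp x * gaussianPDFReal μ v x = exp (μ + v / 2) * gaussianPDFReal (μ + v) v x := by
  have hv' : (v : ℝ) ≠ 0 := NNReal.coe_ne_zero.mpr hv
  simp only [gaussianPDFReal, mul_left_comm (exp _), ← exp_add]
  congr 2
  field_simp
  ring

lemma setIntegral_exp_gaussianReal {μ : ℝ} {v : ℝ≥0} (hv : v ≠ 0) {s : Set ℝ}
    (hs : MeasurableSet s) :
    ∫ x in s, exp x ∂gaussianReal μ v = exp (μ + v / 2) * (gaussianReal (μ + v) v).real s := by
  rw [← integral_indicator hs, integral_gaussianReal_eq_integral_smul hv, measureReal_def,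
    gaussianReal_apply_eq_integral _ hv,
    ENNReal.toReal_ofReal (setIntegral_nonneg hs fun _ _ ↦ gaussianPDFReal_nonneg _ _ _),
    ← integral_const_mul, ← integral_indicator hs]
  congr 1 with x
  by_cases hx : x ∈ s
  · rw [indicator_of_mem hx, indicator_of_mem hx, smul_eq_mul, mul_comm, exp_mul_gaussianPDFReal hv]
  · rw [indicator_of_notMem hx, indicator_of_notMem hx, smul_zero]

lemma max_mul_exp_sub_eq_indicator {K : ℝ} (hK : 0 < K) (w y : ℝ) :
    max (w * (exp y - K)) 0 = {y | w * log K ≤ w * y}.indicator (fun y ↦ w * exp y - w * K) y := by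
  have hsign : 0 ≤ w * (exp y - K) ↔ w * log K ≤ w * y := by
    rcases lt_trichotomy w 0 with hw | rfl | hw
    · rw [show w * (exp y - K) = -w * (K - exp y) by ring,
        mul_nonneg_iff_of_pos_left (neg_pos.2 hw), sub_nonneg, ← le_log_iff_exp_le hK, mul_le_mul_left_of_neg hw]
    · simp
    · rw [mul_nonneg_iff_of_pos_left hw, mul_le_mul_iff_right₀ hw, sub_nonneg, log_le_iff_le_exp hK]
  rw [indicator_apply]
  split_ifs with h
  · rw [max_eq_left (hsign.mpr h)]; ring
  · exact max_eq_right (not_le.mp (hsign.not.mpr h)).le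

lemma integral_max_mul_exp_sub_gaussianReal {μ V w K : ℝ} {v : ℝ≥0} (hv : (v : ℝ) = V ^ 2)
    (hV : 0 < V) (hw : w ^ 2 = 1) (hK : 0 < K) :
    ∫ y, max (w * (exp y - K)) 0 ∂gaussianReal μ v =
      w * exp (μ + V ^ 2 / 2) * stdNormalCDF (w * (μ - log K + V ^ 2) / V)
        - w * K * stdNormalCDF (w * (μ - log K) / V) := by
  have hv0 : v ≠ 0 := by
    rw [← NNReal.coe_ne_zero, hv]; positivity
  have hS : MeasurableSet {y | w * log K ≤ w * y} :=
    measurableSet_le measurable_const (measurable_const.mul measurable_id)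
  have hexp : Integrable exp (gaussianReal μ v) := by
    simpa using integrable_exp_mul_gaussianReal (μ := μ) (v := v) 1
  simp_rw [max_mul_exp_sub_eq_indicator hK]
  rw [integral_indicator hS, integral_sub (hexp.integrableOn.const_mul w) (integrable_const _),
    integral_const_mul, setIntegral_exp_gaussianReal hv0 hS, setIntegral_const,
    gaussianReal_real_setOf_mul_le_mul hv hV hw,
    gaussianReal_real_setOf_mul_le_mul hv hV hw, hv, smul_eq_mul, add_sub_right_comm]
  ring

theorem lognormal_option_price_general
    {Ω : Type*} [MeasurableSpace Ω] (P : Measure Ω)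
    (X : Ω → ℝ) (hXpos : ∀ ω, 0 < X ω)
    (M V : ℝ) (hV : 0 < V)
    (hlaw : Measure.map (fun ω => Real.log (X ω)) P =
      gaussianReal M (⟨V ^ 2, sq_nonneg V⟩ : ℝ≥0))
    (K : ℝ) (hK : 0 < K) (w : ℝ) (hw : w = -1 ∨ w = 1) :
    ∫ ω, max (w * (X ω - K)) 0 ∂P =
      w * Real.exp (M + V ^ 2 / 2) * stdNormalCDF (w * (M - Real.log K + V ^ 2) / V)
        - w * K * stdNormalCDF (w * (M - Real.log K) / V) := by
  -- `⟨V ^ 2, _⟩` elaborates at type `{r // 0 ≤ r}`, where instance search fails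
  obtain ⟨v, hv, hlaw⟩ :
      ∃ v : ℝ≥0, (v : ℝ) = V ^ 2 ∧ P.map (fun ω ↦ log (X ω)) = gaussianReal M v :=
    ⟨_, rfl, hlaw⟩
  have hlogX : HasLaw (fun ω ↦ log (X ω)) (gaussianReal M v) P :=
    ⟨aemeasurable_of_map_neZero (by rw [hlaw]; infer_instance), hlaw⟩
  have hw2 : w ^ 2 = 1 := by rcases hw with rfl | rfl <;> norm_num
  have hpayoff : Continuous fun y ↦ max (w * (exp y - K)) 0 := by fun_prop
  calc ∫ ω, max (w * (X ω - K)) 0 ∂P = ∫ ω, max (w * (exp (log (X ω)) - K)) 0 ∂P := by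
        simp_rw [exp_log (hXpos _)]
    _ = ∫ y, max (w * (exp y - K)) 0 ∂gaussianReal M v :=
        hlogX.integral_comp hpayoff.aestronglyMeasurable
    _ = _ := integral_max_mul_exp_sub_gaussianReal hv hV hw2 hK

/-- Black-type formula for the undiscounted price of a European vanilla
option on a lognormally distributed asset `X` with `log X ~ N(M, V²)`. -/
theorem lognormal_option_price
    {Ω : Type*} [MeasurableSpace Ω] (P : Measure Ω) [IsProbabilityMeasure P]
    (X : Ω → ℝ) (hXpos : ∀ ω, 0 < X ω)
    (M V : ℝ) (hV : 0 < V)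
    (hlaw : Measure.map (fun ω => Real.log (X ω)) P =
      gaussianReal M (⟨V ^ 2, sq_nonneg V⟩ : ℝ≥0))
    (K : ℝ) (hK : 0 < K) (w : ℝ) (hw : w = -1 ∨ w = 1) :
    ∫ ω, max (w * (X ω - K)) 0 ∂P =
      w * Real.exp (M + V ^ 2 / 2) * stdNormalCDF (w * (M - Real.log K + V ^ 2) / V)
        - w * K * stdNormalCDF (w * (M - Real.log K) / V) :=
  lognormal_option_price_general P X hXpos M V hV hlaw K hK w hw
end

section
/- Let M ≥ 1 be a natural number and for i = 1, …, M let c_i > 0, A_i > 0, B_i > 0 be real numbers. Let K > 0 and suppose n* ∈ ℝ satisfies Σ_{i=1}^M c_i·A_i·exp(−n*·B_i) = K. Then for every n ∈ ℝ, max(Σ_{i=1}^M c_i·A_i·exp(−n·B_i) − K, 0) = Σ_{i=1}^M c_i·max(A_i·exp(−n·B_i) − A_i·exp(−n*·B_i), 0). -/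
/-!
Each zero-coupon price `n ↦ A i * exp (-n * B i)` is antitone in the short rate, so for a given `n`
the differences `A i * exp (-n * B i) - A i * exp (-n* * B i)` all have the sign of `n* - n`.
For terms of a common sign, taking the positive part commutes with summation, and `K` is by
definition of `n*` the sum of the coupon-weighted strikes.
-/

open Finset

theorem Finset.max_sum_zero_eq_sum_max_zero {ι M : Type*} [AddCommMonoid M] [LinearOrder M]
    [IsOrderedAddMonoid M] (s : Finset ι) (x : ι → M)
    (hx : (∀ i ∈ s, 0 ≤ x i) ∨ ∀ i ∈ s, x i ≤ 0) :
    max (∑ i ∈ s, x i) 0 = ∑ i ∈ s, max (x i) 0 := by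
  rcases hx with hx | hx
  · rw [max_eq_left (sum_nonneg hx)]
    exact sum_congr rfl fun i hi => (max_eq_left (hx i hi)).symm
  · rw [max_eq_right (sum_nonpos hx), sum_congr rfl fun i hi => max_eq_right (hx i hi),
      sum_const_zero]

theorem max_sum_mul_sub_zero_eq_sum_mul_max_sub_zero_of_antitone {ι α : Type*} [LinearOrder α]
    (s : Finset ι) (c : ι → ℝ) (hc : ∀ i, 0 ≤ c i) (f : ι → α → ℝ) (hf : ∀ i, Antitone (f i))
    (n m : α) :
    max (∑ i ∈ s, c i * f i n - ∑ i ∈ s, c i * f i m) 0 =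
      ∑ i ∈ s, c i * max (f i n - f i m) 0 := by
  have same_sign : (∀ i ∈ s, 0 ≤ c i * (f i n - f i m)) ∨ ∀ i ∈ s, c i * (f i n - f i m) ≤ 0 := by
    rcases le_total n m with h | h
    · exact .inl fun i _ => mul_nonneg (hc i) (sub_nonneg.2 (hf i h))
    · exact .inr fun i _ => mul_nonpos_of_nonneg_of_nonpos (hc i) (sub_nonpos.2 (hf i h))
  simp only [← sum_sub_distrib, ← mul_sub, s.max_sum_zero_eq_sum_max_zero _ same_sign,
    mul_max_of_nonneg _ _ (hc _), mul_zero]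

theorem antitone_mul_exp_neg_mul {A B : ℝ} (hA : 0 ≤ A) (hB : 0 ≤ B) :
    Antitone fun n => A * Real.exp (-n * B) := fun _ _ h =>
  mul_le_mul_of_nonneg_left (Real.exp_le_exp.2 (by nlinarith)) hA

theorem jamshidian_decomposition_general
    (M : ℕ) (c A B : Fin M → ℝ)
    (hc : ∀ i, 0 < c i) (hA : ∀ i, 0 < A i) (hB : ∀ i, 0 < B i)
    (K : ℝ) (nstar : ℝ)
    (hstar : ∑ i, c i * A i * Real.exp (-nstar * B i) = K) :
    ∀ n : ℝ,
      max (∑ i, c i * A i * Real.exp (-n * B i) - K) 0 =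
        ∑ i, c i * max (A i * Real.exp (-n * B i) - A i * Real.exp (-nstar * B i)) 0 := by
  intro n
  rw [← hstar]
  simpa only [mul_assoc] using
    max_sum_mul_sub_zero_eq_sum_mul_max_sub_zero_of_antitone univ c (fun i => (hc i).le)
      (fun i n => A i * Real.exp (-n * B i))
      (fun i => antitone_mul_exp_neg_mul (hA i).le (hB i).le) n nstar

/-- Jamshidian's decomposition: the payoff of an option on a
coupon-bearing bond equals the payoff of a portfolio of options on the individual
zero-coupon bonds, struck at the bond prices evaluated at the critical rate `n*`. -/
theorem jamshidian_decomposition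
    (M : ℕ) (hM : 1 ≤ M) (c A B : Fin M → ℝ)
    (hc : ∀ i, 0 < c i) (hA : ∀ i, 0 < A i) (hB : ∀ i, 0 < B i)
    (K : ℝ) (hK : 0 < K) (nstar : ℝ)
    (hstar : ∑ i, c i * A i * Real.exp (-nstar * B i) = K) :
    ∀ n : ℝ,
      max (∑ i, c i * A i * Real.exp (-n * B i) - K) 0 =
        ∑ i, c i * max (A i * Real.exp (-n * B i) - A i * Real.exp (-nstar * B i)) 0 :=
  jamshidian_decomposition_general M c A B hc hA hB K nstar hstar
end

section
/- Let Ω > 0, let Z : ℝ → ℝ be continuously differentiable, and let β : ℝ → ℝ be three times differentiable with continuous third derivative, with β'(t) ≠ 0 and β''(t) ≠ 0 for all t. Suppose that for all t ∈ ℝ, ∫_t^{t+Ω} Z(T) dT = −(Z(t + Ω) − Z(t))·β'(t)/β''(t). Then, for all t₀ and t, Z(t + Ω) − Z(t) = (Z(t₀ + Ω) − Z(t₀))·exp(∫_{t₀}^t −(2·β''(s)² − β'(s)·β'''(s))/(β'(s)·β''(s)) ds). -/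
/-!
Put `u t = Z (t + Ω) - Z t`. The fundamental theorem of calculus gives `(∫_t^{t+Ω} Z)' = u`,
while differentiating the right-hand side `-u β'/β''` of the hypothesis gives an expression in
`u`, `u'`, `β'`, `β''`, `β'''`. Equating the two and solving for `u'` yields the linear equation
`u' = f u` with `f = -(2β''² - β'β''')/(β'β'')`, whose solutions are `u t₀ · exp ∫_{t₀}^t f`,
since `u · exp (-∫_{t₀}^· f)` has zero derivative.
-/

open MeasureTheory

theorem hasDerivAt_integral_add_const {Z : ℝ → ℝ} (hZ : Continuous Z) (Ω x : ℝ) :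
    HasDerivAt (fun s => ∫ T in s..(s + Ω), Z T) (Z (x + Ω) - Z x) x := by
  have hsplit : (fun s => ∫ T in s..(s + Ω), Z T) =
      fun s => (∫ T in (0 : ℝ)..(s + Ω), Z T) - ∫ T in (0 : ℝ)..s, Z T := by
    funext s
    exact (intervalIntegral.integral_interval_sub_left
      (hZ.intervalIntegrable _ _) (hZ.intervalIntegrable _ _)).symm
  rw [hsplit]
  have hupper : HasDerivAt (fun s => ∫ T in (0 : ℝ)..(s + Ω), Z T) (Z (x + Ω)) x := by
    simpa using (hZ.integral_hasStrictDerivAt 0 (x + Ω)).hasDerivAt.comp_add_const x Ω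
  exact hupper.sub (hZ.integral_hasStrictDerivAt 0 x).hasDerivAt

theorem eq_mul_exp_integral_of_hasDerivAt {u f : ℝ → ℝ} (hf : Continuous f)
    (hu : ∀ s, HasDerivAt u (f s * u s) s) (t₀ t : ℝ) :
    u t = u t₀ * Real.exp (∫ s in t₀..t, f s) := by
  set F : ℝ → ℝ := fun x => ∫ s in t₀..x, f s
  have hF : ∀ x, HasDerivAt F (f x) x := fun x => (hf.integral_hasStrictDerivAt t₀ x).hasDerivAt
  have hconst : ∀ x, HasDerivAt (fun y => u y * Real.exp (-F y)) 0 x := by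
    intro x
    have hE : HasDerivAt (fun y => Real.exp (-F y)) (Real.exp (-F x) * -f x) x :=
      (hF x).neg.exp
    exact ((hu x).mul hE).congr_deriv (by ring)
  have key : u t * Real.exp (-F t) = u t₀ * Real.exp (-F t₀) :=
    is_const_of_deriv_eq_zero (fun x => (hconst x).differentiableAt)
      (fun x => (hconst x).deriv) t t₀
  have hF₀ : F t₀ = 0 := intervalIntegral.integral_same
  rw [hF₀, neg_zero, Real.exp_zero, mul_one] at key
  rw [← key, mul_assoc, ← Real.exp_add, neg_add_cancel, Real.exp_zero, mul_one]

theorem hasDerivAt_eq_mul_of_hasDerivAt_neg_mul_div {u p q : ℝ → ℝ} {u' q' x : ℝ}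
    (hu : HasDerivAt u u' x) (hp : HasDerivAt p (q x) x) (hq : HasDerivAt q q' x)
    (hp0 : p x ≠ 0) (hq0 : q x ≠ 0)
    (hG : HasDerivAt (fun y => -u y * p y / q y) (u x) x) :
    u' = -(2 * q x ^ 2 - p x * q') / (p x * q x) * u x := by
  have hquot := hG.unique ((hu.neg.mul hp).div hq hq0)
  rw [eq_div_iff (pow_ne_zero 2 hq0)] at hquot
  simp only [Pi.neg_apply, Pi.mul_apply] at hquot
  rw [div_mul_eq_mul_div, eq_div_iff (mul_ne_zero hp0 hq0)]
  linear_combination hquot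

theorem liquidity_function_relation_general
    (Ω : ℝ) (Z β : ℝ → ℝ)
    (hZ : ContDiff ℝ 1 Z) (hβ : ContDiff ℝ 3 β)
    (hβ' : ∀ t, deriv β t ≠ 0) (hβ'' : ∀ t, deriv (deriv β) t ≠ 0)
    (heq : ∀ t, (∫ T in t..(t + Ω), Z T) =
      -(Z (t + Ω) - Z t) * deriv β t / deriv (deriv β) t) :
    ∀ t₀ t : ℝ,
      Z (t + Ω) - Z t =
        (Z (t₀ + Ω) - Z t₀) *
          Real.exp (∫ s in t₀..t,
            -(2 * (deriv (deriv β) s) ^ 2 - deriv β s * deriv (deriv (deriv β)) s) /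
              (deriv β s * deriv (deriv β) s)) := by
  have hβ1 : ContDiff ℝ 2 (deriv β) := hβ.deriv'
  have hβ2 : ContDiff ℝ 1 (deriv (deriv β)) := hβ1.deriv'
  have hZd : Differentiable ℝ Z := hZ.differentiable one_ne_zero
  have hβ1d : Differentiable ℝ (deriv β) := hβ1.differentiable two_ne_zero
  have hβ2d : Differentiable ℝ (deriv (deriv β)) := hβ2.differentiable one_ne_zero
  have hu : ∀ s, HasDerivAt (fun x => Z (x + Ω) - Z x) (deriv Z (s + Ω) - deriv Z s) s :=
    fun s => ((hZd _).hasDerivAt.comp_add_const s Ω).sub (hZd s).hasDerivAt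
  have hode : ∀ s, HasDerivAt (fun x => Z (x + Ω) - Z x)
      (-(2 * (deriv (deriv β) s) ^ 2 - deriv β s * deriv (deriv (deriv β)) s) /
        (deriv β s * deriv (deriv β) s) * (Z (s + Ω) - Z s)) s := by
    intro s
    have hG := hasDerivAt_integral_add_const hZd.continuous Ω s
    rw [funext heq] at hG
    rw [← hasDerivAt_eq_mul_of_hasDerivAt_neg_mul_div (hu s) (hβ1d s).hasDerivAt
      (hβ2d s).hasDerivAt (hβ' s) (hβ'' s) hG]
    exact hu s
  have hf : Continuous fun s =>
      -(2 * (deriv (deriv β) s) ^ 2 - deriv β s * deriv (deriv (deriv β)) s) /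
        (deriv β s * deriv (deriv β) s) := by
    have hβ3 : Continuous (deriv (deriv (deriv β))) := hβ2.continuous_deriv le_rfl
    fun_prop (disch := exact fun s => mul_ne_zero (hβ' s) (hβ'' s))
  exact eq_mul_exp_integral_of_hasDerivAt hf hode

/-- Equating the CTCB mean-reversion speed
`(Z(t+Ω) − Z(t))/∫_t^{t+Ω} Z` with the Hull–White mean-reversion speed `−β''/β'`
forces the exponential relationship between the liquidity function `Z` and `β`. -/
theorem liquidity_function_relation
    (Ω : ℝ) (hΩ : 0 < Ω) (Z β : ℝ → ℝ)
    (hZ : ContDiff ℝ 1 Z) (hβ : ContDiff ℝ 3 β)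
    (hβ' : ∀ t, deriv β t ≠ 0) (hβ'' : ∀ t, deriv (deriv β) t ≠ 0)
    (heq : ∀ t, (∫ T in t..(t + Ω), Z T) =
      -(Z (t + Ω) - Z t) * deriv β t / deriv (deriv β) t) :
    ∀ t₀ t : ℝ,
      Z (t + Ω) - Z t =
        (Z (t₀ + Ω) - Z t₀) *
          Real.exp (∫ s in t₀..t,
            -(2 * (deriv (deriv β) s) ^ 2 - deriv β s * deriv (deriv (deriv β)) s) /
              (deriv β s * deriv (deriv β) s)) :=
  liquidity_function_relation_general Ω Z β hZ hβ hβ' hβ'' heq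
end
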